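/- (Convergence of α-NormEC, non-private setting.) Consider the α-NormEC iterates for differentiable functions f₁, …, f_n : ℝ^d → ℝ, where each f_i has L_i-Lipschitz gradient, and f := (1/n)∑_{i=1}^n f_i has L-Lipschitz gradient and satisfies f(x) ≥ f_inf for all x ∈ ℝ^d, where f_inf ∈ ℝ. Let L_max = max_{1≤i≤n} L_i and R = max_{1≤i≤n} ‖∇f_i(x⁰) − g_i⁰‖. Assume 0 < β ≤ α (which implies β/(α + R) < 1) and 0 < γ ≤ (β·R/(α + R))·(1/L_max). Then for every K ∈ ℕ: min_{0≤k≤K} ‖∇f(x^k)‖ ≤ (f(x⁰) − f_inf)/(γ(K + 1)) + 2R + (L/2)·γ. -/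

import Mathlib

/-!
Each client's error `‖∇fᵢ(xᵏ) - gᵢᵏ‖` stays below `R`: the smoothed-normalized correction
shrinks an error of size at most `R` by at least `βR/(α+R)`, while a normalized step of length
at most `γ` moves `∇fᵢ` by at most `L_max γ ≤ βR/(α+R)`. Hence the averaged estimate `ḡᵏ⁺¹` is
within `R` of `∇f(xᵏ)`, so by the descent lemma the normalized step decreases `f` by at least
`γ (‖∇f(xᵏ)‖ - 2R) - Lγ²/2`; telescoping over `k ≤ K` gives the bound.
-/

open scoped RealInnerProductSpace

section Gradient

variable {E : Type*} [NormedAddCommGroup E] [InnerProductSpace ℝ E] [CompleteSpace E]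

theorem le_add_inner_gradient_add_sq_of_lipschitz_gradient {f : E → ℝ} (hf : Differentiable ℝ f)
    {L : ℝ} (hlip : ∀ x y, ‖gradient f x - gradient f y‖ ≤ L * ‖x - y‖) (x y : E) :
    f y ≤ f x + ⟪gradient f x, y - x⟫ + L / 2 * ‖y - x‖ ^ 2 := by
  set v := y - x
  set φ : ℝ → ℝ := fun t => f (x + t • v) - t * ⟪gradient f x, v⟫ - L / 2 * t ^ 2 * ‖v‖ ^ 2
  have hφ : ∀ t, HasDerivAt φ
      (⟪gradient f (x + t • v), v⟫ - ⟪gradient f x, v⟫ - L * t * ‖v‖ ^ 2) t := by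
    intro t
    have hline : HasDerivAt (fun t : ℝ => x + t • v) v t := by
      simpa using ((hasDerivAt_id t).smul_const v).const_add x
    have hcomp := (hf (x + t • v)).hasGradientAt.hasFDerivAt.comp_hasDerivAt t hline
    rw [InnerProductSpace.toDual_apply_apply] at hcomp
    refine ((hcomp.sub ((hasDerivAt_id' t).mul_const ⟪gradient f x, v⟫)).sub
      (((hasDerivAt_pow 2 t).const_mul (L / 2)).mul_const (‖v‖ ^ 2))).congr_deriv ?_
    ring
  have hφ' : ∀ t ∈ interior (Set.Ici (0 : ℝ)),
      ⟪gradient f (x + t • v), v⟫ - ⟪gradient f x, v⟫ - L * t * ‖v‖ ^ 2 ≤ 0 := by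
    intro t ht
    rw [interior_Ici, Set.mem_Ioi] at ht
    have hnear : ‖gradient f (x + t • v) - gradient f x‖ ≤ L * (t * ‖v‖) := by
      simpa [norm_smul, abs_of_pos ht] using hlip (x + t • v) x
    calc ⟪gradient f (x + t • v), v⟫ - ⟪gradient f x, v⟫ - L * t * ‖v‖ ^ 2
        = ⟪gradient f (x + t • v) - gradient f x, v⟫ - L * t * ‖v‖ ^ 2 := by
          rw [inner_sub_left]
      _ ≤ ‖gradient f (x + t • v) - gradient f x‖ * ‖v‖ - L * (t * ‖v‖) * ‖v‖ := by
          nlinarith [real_inner_le_norm (gradient f (x + t • v) - gradient f x) v]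
      _ ≤ 0 := by nlinarith [norm_nonneg v]
  have hanti := antitoneOn_of_hasDerivWithinAt_nonpos (convex_Ici 0)
    (fun t _ => (hφ t).continuousAt.continuousWithinAt) (fun t _ => (hφ t).hasDerivWithinAt) hφ'
  have := hanti Set.self_mem_Ici (Set.mem_Ici.mpr zero_le_one) zero_le_one
  simp only [φ, v, one_smul, zero_smul, add_zero, add_sub_cancel] at this
  linarith

theorem gradient_const_mul_sum {ι : Type*} [Fintype ι] (c : ℝ) {fi : ι → E → ℝ}
    (hfi : ∀ i, Differentiable ℝ (fi i)) (p : E) :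
    gradient (fun y => c * ∑ i, fi i y) p = c • ∑ i, gradient (fi i) p := by
  refine HasGradientAt.gradient ?_
  rw [hasGradientAt_iff_hasFDerivAt, map_smul, map_sum]
  exact (HasFDerivAt.fun_sum fun i _ => (hfi i p).hasGradientAt.hasFDerivAt).const_mul c

end Gradient

section SmoothedNormalization

variable {F : Type*} [NormedAddCommGroup F] [NormedSpace ℝ F]

noncomputable def smoothedNormalize (α : ℝ) (v : F) : F := (α + ‖v‖)⁻¹ • v

theorem norm_sub_smul_smoothedNormalize_le {α β R : ℝ} (hβ : 0 < β) (hβα : β ≤ α) {v : F}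
    (hv : ‖v‖ ≤ R) : ‖v - β • smoothedNormalize α v‖ ≤ R - β * R / (α + R) := by
  have hαv : β ≤ α + ‖v‖ := by linarith [norm_nonneg v]
  have hαR : β ≤ α + R := hαv.trans (by linarith)
  have hcoef : v - β • smoothedNormalize α v = (1 - β / (α + ‖v‖)) • v := by
    rw [smoothedNormalize, smul_smul, sub_smul, one_smul, div_eq_mul_inv]
  have hcoef_nonneg : 0 ≤ 1 - β / (α + ‖v‖) := by
    rw [sub_nonneg, div_le_one (hβ.trans_le hαv)]; exact hαv
  rw [hcoef, norm_smul, Real.norm_of_nonneg hcoef_nonneg]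
  calc (1 - β / (α + ‖v‖)) * ‖v‖ ≤ (1 - β / (α + R)) * ‖v‖ := by
        gcongr
        linarith
    _ ≤ (1 - β / (α + R)) * R := by
        gcongr
        rw [sub_nonneg, div_le_one (hβ.trans_le hαR)]; exact hαR
    _ = R - β * R / (α + R) := by ring

end SmoothedNormalization

section NormalizedStep

variable {E : Type*} [NormedAddCommGroup E] [InnerProductSpace ℝ E]

noncomputable def normalizedStep [DecidableEq E] (γ : ℝ) (x w : E) : E :=
  if w = 0 then x else x - γ • ‖w‖⁻¹ • w

theorem norm_normalizedStep_sub_le [DecidableEq E] {γ : ℝ} (hγ : 0 ≤ γ) (x w : E) :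
    ‖normalizedStep γ x w - x‖ ≤ γ := by
  unfold normalizedStep
  split_ifs with hw
  · simpa using hγ
  · have hunit : ‖‖w‖⁻¹ • w‖ = 1 := norm_smul_inv_norm hw
    rw [sub_sub_cancel_left, norm_neg, norm_smul, hunit, Real.norm_of_nonneg hγ, mul_one]

theorem norm_sub_two_mul_norm_sub_le_inner_normalize (G : E) {w : E} (hw : w ≠ 0) :
    ‖G‖ - 2 * ‖G - w‖ ≤ ⟪G, ‖w‖⁻¹ • w⟫ := by
  have hw' : 0 < ‖w‖ := norm_pos_iff.mpr hw
  have hsplit : ⟪G, ‖w‖⁻¹ • w⟫ = ‖w‖⁻¹ * ⟪G - w, w⟫ + ‖w‖ := by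
    rw [real_inner_smul_right, inner_sub_left, real_inner_self_eq_norm_sq]
    field_simp
    ring
  have hcs : -(‖G - w‖ * ‖w‖) ≤ ⟪G - w, w⟫ := (abs_le.mp (abs_real_inner_le_norm _ _)).1
  have htri : ‖G‖ ≤ ‖G - w‖ + ‖w‖ := norm_le_norm_sub_add G w
  have hcs' : -‖G - w‖ ≤ ‖w‖⁻¹ * ⟪G - w, w⟫ := by
    rw [le_inv_mul_iff₀ hw']; linarith
  linarith

variable [CompleteSpace E]

theorem descent_normalizedStep [DecidableEq E] {f : E → ℝ} (hf : Differentiable ℝ f) {L : ℝ} (hL : 0 ≤ L)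
    (hlip : ∀ x y, ‖gradient f x - gradient f y‖ ≤ L * ‖x - y‖) {γ R : ℝ} (hγ : 0 ≤ γ)
    {x w : E} (hw : ‖gradient f x - w‖ ≤ R) :
    γ * (‖gradient f x‖ - (2 * R + L / 2 * γ)) ≤ f x - f (normalizedStep γ x w) := by
  by_cases hw0 : w = 0
  · rw [normalizedStep, if_pos hw0, sub_self]
    rw [hw0, sub_zero] at hw
    nlinarith [mul_nonneg hγ hγ, norm_nonneg (gradient f x)]
  · rw [normalizedStep, if_neg hw0]
    have hdesc := le_add_inner_gradient_add_sq_of_lipschitz_gradient hf hlip x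
      (x - γ • ‖w‖⁻¹ • w)
    have hstep : x - γ • ‖w‖⁻¹ • w - x = -(γ • ‖w‖⁻¹ • w) := sub_sub_cancel_left _ _
    have hunit : ‖‖w‖⁻¹ • w‖ = 1 := norm_smul_inv_norm hw0
    rw [hstep, inner_neg_right, real_inner_smul_right, norm_neg, norm_smul, hunit,
      Real.norm_of_nonneg hγ] at hdesc
    have hinner := norm_sub_two_mul_norm_sub_le_inner_normalize (gradient f x) hw0
    nlinarith

end NormalizedStep

theorem errorFeedback_norm_sub_le {E F : Type*} [SeminormedAddCommGroup E]
    [NormedAddCommGroup F] [NormedSpace ℝ F] {x : ℕ → E} {g : ℕ → F} {G : E → F}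
    {Lc γ α β R : ℝ} (hβ : 0 < β) (hβα : β ≤ α)
    (hG : ∀ y z, ‖G y - G z‖ ≤ Lc * ‖y - z‖) (hLc : 0 ≤ Lc)
    (hstep : ∀ k, ‖x (k + 1) - x k‖ ≤ γ) (hγ : γ * Lc ≤ β * R / (α + R))
    (hg : ∀ k, g (k + 1) = g k + β • smoothedNormalize α (G (x k) - g k))
    (h0 : ‖G (x 0) - g 0‖ ≤ R) (k : ℕ) :
    ‖G (x k) - g k‖ ≤ R := by
  induction k with
  | zero => exact h0
  | succ k ih =>
    have hcontract : ‖G (x k) - g (k + 1)‖ ≤ R - β * R / (α + R) := by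
      rw [hg k, sub_add_eq_sub_sub]
      exact norm_sub_smul_smoothedNormalize_le hβ hβα ih
    have hdrift : ‖G (x (k + 1)) - G (x k)‖ ≤ γ * Lc :=
      (hG _ _).trans (by nlinarith [hstep k, norm_nonneg (x (k + 1) - x k)])
    linarith [norm_sub_le_norm_sub_add_norm_sub (G (x (k + 1))) (G (x k)) (g (k + 1))]

theorem norm_inv_smul_sum_sub_inv_smul_sum_le {F : Type*} [NormedAddCommGroup F]
    [NormedSpace ℝ F] {n : ℕ} (hn : 0 < n) {a b : Fin n → F} {r : ℝ}
    (h : ∀ i, ‖a i - b i‖ ≤ r) :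
    ‖(n : ℝ)⁻¹ • ∑ i, a i - (n : ℝ)⁻¹ • ∑ i, b i‖ ≤ r := by
  have hn' : (0 : ℝ) < n := Nat.cast_pos.mpr hn
  have hsum : ‖∑ i, (a i - b i)‖ ≤ n * r := by
    simpa using norm_sum_le_of_le Finset.univ fun i _ => h i
  rw [← smul_sub, ← Finset.sum_sub_distrib, norm_smul, Real.norm_of_nonneg (by positivity),
    inv_mul_le_iff₀ hn']
  exact hsum

theorem inf'_range_le_of_mul_sub_le_sub_succ {a F : ℕ → ℝ} {γ c m : ℝ} (hγ : 0 < γ)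
    (h : ∀ k, γ * (a k - c) ≤ F k - F (k + 1)) (hm : ∀ k, m ≤ F k) (K : ℕ) :
    (Finset.range (K + 1)).inf' Finset.nonempty_range_add_one a ≤
      (F 0 - m) / (γ * (K + 1)) + c := by
  set μ := (Finset.range (K + 1)).inf' Finset.nonempty_range_add_one a
  have hsum : ∑ k ∈ Finset.range (K + 1), γ * (μ - c) ≤ F 0 - F (K + 1) := by
    rw [← Finset.sum_range_sub']
    refine Finset.sum_le_sum fun k hk => (h k).trans' ?_
    gcongr
    exact Finset.inf'_le a hk
  rw [Finset.sum_const, Finset.card_range, nsmul_eq_mul] at hsum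
  rw [← sub_le_iff_le_add, le_div_iff₀ (by positivity)]
  push_cast at hsum
  linarith [hm (K + 1)]

theorem pos_and_mul_le_of_le_mul_one_div {γ c M : ℝ} (hγ : 0 < γ) (hc : 0 ≤ c)
    (h : γ ≤ c * (1 / M)) : 0 < M ∧ γ * M ≤ c := by
  have hM : 0 < M := by
    by_contra! hM
    linarith [mul_nonpos_of_nonneg_of_nonpos hc (one_div_nonpos.mpr hM)]
  exact ⟨hM, by rwa [mul_one_div, le_div_iff₀ hM] at h⟩

theorem alpha_normec_convergence_nonprivate_general
    (d n : ℕ) (hn : 0 < n)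
    (fi : Fin n → EuclideanSpace ℝ (Fin d) → ℝ)
    (f : EuclideanSpace ℝ (Fin d) → ℝ)
    (hf : ∀ y, f y = (n : ℝ)⁻¹ * ∑ i, fi i y)
    (hdiffi : ∀ i, Differentiable ℝ (fi i))
    (hdiff : Differentiable ℝ f)
    (Li : Fin n → ℝ)
    (hlipi : ∀ i x y, ‖gradient (fi i) x - gradient (fi i) y‖ ≤ Li i * ‖x - y‖)
    (L : ℝ) (hL : 0 < L)
    (hlip : ∀ x y, ‖gradient f x - gradient f y‖ ≤ L * ‖x - y‖)
    (finf : ℝ) (hfinf : ∀ y, finf ≤ f y)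
    (α β γ Lmax R : ℝ)
    (hLmax : Lmax = Finset.univ.sup' (Finset.univ_nonempty_iff.mpr ⟨⟨0, hn⟩⟩) Li)
    (x : ℕ → EuclideanSpace ℝ (Fin d))
    (g : Fin n → ℕ → EuclideanSpace ℝ (Fin d))
    (hR : R = Finset.univ.sup' (Finset.univ_nonempty_iff.mpr ⟨⟨0, hn⟩⟩)
      (fun i => ‖gradient (fi i) (x 0) - g i 0‖))
    (hβ : 0 < β) (hβα : β ≤ α)
    (hγ : 0 < γ) (hγle : γ ≤ (β * R / (α + R)) * (1 / Lmax))
    (hg : ∀ i k, g i (k + 1) = g i k +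
      β • ((α + ‖gradient (fi i) (x k) - g i k‖)⁻¹ • (gradient (fi i) (x k) - g i k)))
    (hx : ∀ k, x (k + 1) =
      if (n : ℝ)⁻¹ • ∑ i, g i (k + 1) = 0 then x k
      else x k - γ • ‖(n : ℝ)⁻¹ • ∑ i, g i (k + 1)‖⁻¹ • ((n : ℝ)⁻¹ • ∑ i, g i (k + 1)))
    (K : ℕ) :
    (Finset.range (K + 1)).inf' (Finset.nonempty_range_iff.mpr (Nat.succ_ne_zero K))
        (fun k => ‖gradient f (x k)‖) ≤
      (f (x 0) - finf) / (γ * (K + 1)) + 2 * R + (L / 2) * γ := by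
  have hR_le : ∀ i, ‖gradient (fi i) (x 0) - g i 0‖ ≤ R := fun i =>
    hR ▸ Finset.le_sup' (fun i => ‖gradient (fi i) (x 0) - g i 0‖) (Finset.mem_univ i)
  have hR_nonneg : 0 ≤ R := (norm_nonneg _).trans (hR_le ⟨0, hn⟩)
  have hLi : ∀ i, Li i ≤ Lmax := fun i => hLmax ▸ Finset.le_sup' Li (Finset.mem_univ i)
  have hshift_nonneg : 0 ≤ β * R / (α + R) :=
    div_nonneg (mul_nonneg hβ.le hR_nonneg) (by linarith)
  obtain ⟨hLmax_pos, hγLmax⟩ := pos_and_mul_le_of_le_mul_one_div hγ hshift_nonneg hγle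
  have hstep : ∀ k, ‖x (k + 1) - x k‖ ≤ γ := fun k => by
    rw [hx k]; exact norm_normalizedStep_sub_le hγ.le _ _
  have hclient : ∀ i k, ‖gradient (fi i) (x k) - g i k‖ ≤ R := fun i =>
    errorFeedback_norm_sub_le hβ hβα
      (fun y z => (hlipi i y z).trans (mul_le_mul_of_nonneg_right (hLi i) (norm_nonneg _)))
      hLmax_pos.le hstep hγLmax (hg i) (hR_le i)
  have havg : ∀ k, ‖gradient f (x k) - (n : ℝ)⁻¹ • ∑ i, g i (k + 1)‖ ≤ R := fun k => by
    rw [funext hf, gradient_const_mul_sum _ hdiffi]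
    refine norm_inv_smul_sum_sub_inv_smul_sum_le hn fun i => ?_
    rw [hg i k, sub_add_eq_sub_sub]
    exact (norm_sub_smul_smoothedNormalize_le hβ hβα (hclient i k)).trans (by linarith)
  have hdescent :
      ∀ k, γ * (‖gradient f (x k)‖ - (2 * R + L / 2 * γ)) ≤ f (x k) - f (x (k + 1)) := fun k => by
    rw [hx k]; exact descent_normalizedStep hdiff hL.le hlip hγ.le (havg k)
  calc _ ≤ (f (x 0) - finf) / (γ * (K + 1)) + (2 * R + L / 2 * γ) :=
        inf'_range_le_of_mul_sub_le_sub_succ hγ hdescent (fun k => hfinf (x k)) K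
    _ = _ := by ring

/-- Convergence of α-NormEC in the non-private setting (Theorem 1): under
`0 < β ≤ α` and `0 < γ ≤ (βR/(α+R))·(1/L_max)`, where
`R = max_i ‖∇f_i(x⁰) − g_i⁰‖` and `L_max = max_i L_i`, the α-NormEC iterates satisfy
`min_{0≤k≤K} ‖∇f(x^k)‖ ≤ (f(x⁰) − f_inf)/(γ(K+1)) + 2R + (L/2)γ`. -/
theorem alpha_normec_convergence_nonprivate
    (d n : ℕ) (hn : 0 < n)
    (fi : Fin n → EuclideanSpace ℝ (Fin d) → ℝ)
    (f : EuclideanSpace ℝ (Fin d) → ℝ)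
    (hf : ∀ y, f y = (n : ℝ)⁻¹ * ∑ i, fi i y)
    (hdiffi : ∀ i, Differentiable ℝ (fi i))
    (hdiff : Differentiable ℝ f)
    (Li : Fin n → ℝ) (hLipos : ∀ i, 0 < Li i)
    (hlipi : ∀ i x y, ‖gradient (fi i) x - gradient (fi i) y‖ ≤ Li i * ‖x - y‖)
    (L : ℝ) (hL : 0 < L)
    (hlip : ∀ x y, ‖gradient f x - gradient f y‖ ≤ L * ‖x - y‖)
    (finf : ℝ) (hfinf : ∀ y, finf ≤ f y)
    (α β γ Lmax R : ℝ)
    (hLmax : Lmax = Finset.univ.sup' (Finset.univ_nonempty_iff.mpr ⟨⟨0, hn⟩⟩) Li)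
    (x : ℕ → EuclideanSpace ℝ (Fin d))
    (g : Fin n → ℕ → EuclideanSpace ℝ (Fin d))
    (hR : R = Finset.univ.sup' (Finset.univ_nonempty_iff.mpr ⟨⟨0, hn⟩⟩)
      (fun i => ‖gradient (fi i) (x 0) - g i 0‖))
    (hβ : 0 < β) (hβα : β ≤ α)
    (hγ : 0 < γ) (hγle : γ ≤ (β * R / (α + R)) * (1 / Lmax))
    (hg : ∀ i k, g i (k + 1) = g i k +
      β • ((α + ‖gradient (fi i) (x k) - g i k‖)⁻¹ • (gradient (fi i) (x k) - g i k)))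
    (hx : ∀ k, x (k + 1) =
      if (n : ℝ)⁻¹ • ∑ i, g i (k + 1) = 0 then x k
      else x k - γ • ‖(n : ℝ)⁻¹ • ∑ i, g i (k + 1)‖⁻¹ • ((n : ℝ)⁻¹ • ∑ i, g i (k + 1)))
    (K : ℕ) :
    (Finset.range (K + 1)).inf' (Finset.nonempty_range_iff.mpr (Nat.succ_ne_zero K))
        (fun k => ‖gradient f (x k)‖) ≤
      (f (x 0) - finf) / (γ * (K + 1)) + 2 * R + (L / 2) * γ :=
  alpha_normec_convergence_nonprivate_general d n hn fi f hf hdiffi hdiff Li hlipi L hL hlip finf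
    hfinf α β γ Lmax R hLmax x g hR hβ hβα hγ hγle hg hx K
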